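/- For every graph G and every integer ℓ ≥ 1, π*(G ⊠ K_ℓ) ≤ ℓ·π*(G), where K_ℓ is the complete graph on ℓ vertices. -/

import Mathlib

/-- A *lazy walk* in `G` is a sequence of vertices in which any two consecutive vertices
are equal or adjacent. -/
def SimpleGraph.IsLazyWalk {V : Type*} (G : SimpleGraph V) (l : List V) : Prop :=
  l.Chain' fun a b => a = b ∨ G.Adj a b

/-- A colouring `φ` of `G` is *strongly nonrepetitive* if every `φ`-repetitive lazy walk
`v₀, …, v₂ₖ₋₁` (with `k ≥ 1`, repetitive meaning the first half of the colour sequence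
equals the second half) has `vᵢ = vᵢ₊ₖ` for some `i < k`. -/
def SimpleGraph.IsStronglyNonrepetitiveColouring {V α : Type*} (G : SimpleGraph V)
    (φ : V → α) : Prop :=
  ∀ (l : List V) (k : ℕ), G.IsLazyWalk l → 0 < k → l.length = 2 * k →
    (l.map φ).take k = (l.map φ).drop k → ∃ i < k, l[i]? = l[i + k]?

/-- `π*(G)`: the least `n` such that `G` has a strongly nonrepetitive colouring with
`n` colours. -/
noncomputable def SimpleGraph.strongNonrepChromNum {V : Type*} (G : SimpleGraph V) : ℕ :=
  sInf {n : ℕ | ∃ φ : V → Fin n, G.IsStronglyNonrepetitiveColouring φ}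

/-- The strong product `G ⊠ H`: distinct vertices `(v, x)` and `(w, y)` are adjacent iff
(`v = w` or `vw ∈ E(G)`) and (`x = y` or `xy ∈ E(H)`). -/
def SimpleGraph.strongProd {α β : Type*} (G : SimpleGraph α) (H : SimpleGraph β) :
    SimpleGraph (α × β) where
  Adj x y := x ≠ y ∧ (x.1 = y.1 ∨ G.Adj x.1 y.1) ∧ (x.2 = y.2 ∨ H.Adj x.2 y.2)
  symm := by
    constructor
    rintro x y ⟨h1, h2, h3⟩
    refine ⟨h1.symm, ?_, ?_⟩
    · rcases h2 with h | h
      exacts [Or.inl h.symm, Or.inr h.symm]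
    · rcases h3 with h | h
      exacts [Or.inl h.symm, Or.inr h.symm]
  loopless := by constructor; rintro x ⟨h1, -, -⟩; exact h1 rfl

/- Colour `(v, x) ∈ G ⊠ Kₗ` by the pair `(x, χ v)` for an optimal strongly nonrepetitive
colouring `χ` of `G`. A repetitive lazy walk in `G ⊠ Kₗ` projects to a `χ`-repetitive lazy walk
in `G`, so some `vᵢ, vᵢ₊ₖ` have the same first coordinate; being equally coloured, they also have
the same second coordinate. This works for any map `f : V → W` sending edges to edges or loops in
place of the projection, and any colouring separating the points of each fibre in place of `x`. -/

theorem List.getElem?_eq_getElem?_add_of_take_eq_drop {α : Type*} {xs : List α} {k i : ℕ}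
    (h : xs.take k = xs.drop k) (hi : i < k) : xs[i]? = xs[i + k]? := by
  rw [← List.getElem?_take_of_lt hi, h, List.getElem?_drop, Nat.add_comm]

theorem List.take_map_eq_drop_map_of_take_eq_drop {α β : Type*} {xs : List α} {k : ℕ}
    (h : xs.take k = xs.drop k) (g : α → β) : (xs.map g).take k = (xs.map g).drop k := by
  rw [← List.map_take, ← List.map_drop, h]

namespace SimpleGraph

variable {V W α β : Type*} {G : SimpleGraph V} {H : SimpleGraph W}

theorem strongProd_adj_fst {p q : V × W} (h : (G.strongProd H).Adj p q) :
    p.1 = q.1 ∨ G.Adj p.1 q.1 :=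
  h.2.1

theorem IsLazyWalk.map {f : V → W} (hf : ∀ a b, G.Adj a b → f a = f b ∨ H.Adj (f a) (f b))
    {l : List V} (hl : G.IsLazyWalk l) : H.IsLazyWalk (l.map f) :=
  List.isChain_map_of_isChain f (fun a b hab => hab.elim (Or.inl <| congrArg f ·) (hf a b)) hl

theorem isStronglyNonrepetitiveColouring_of_injective {φ : V → α} (hφ : φ.Injective) :
    G.IsStronglyNonrepetitiveColouring φ := by
  intro l k _ hk _ hrep
  refine ⟨0, hk, ?_⟩
  have h0 := List.getElem?_eq_getElem?_add_of_take_eq_drop hrep hk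
  rw [List.getElem?_map, List.getElem?_map] at h0
  exact Option.map_injective hφ h0

theorem IsStronglyNonrepetitiveColouring.comp_injective {φ : V → α}
    (hφ : G.IsStronglyNonrepetitiveColouring φ) {e : α → β} (he : e.Injective) :
    G.IsStronglyNonrepetitiveColouring (e ∘ φ) := by
  intro l k hl hk hlen hrep
  refine hφ l k hl hk hlen (List.map_injective_iff.2 he ?_)
  simpa only [← List.map_take, ← List.map_drop, List.map_map] using hrep

theorem IsStronglyNonrepetitiveColouring.prod_comp {f : V → W}
    (hf : ∀ a b, G.Adj a b → f a = f b ∨ H.Adj (f a) (f b)) {χ : W → β}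
    (hχ : H.IsStronglyNonrepetitiveColouring χ) {φ : V → α}
    (hφ : ∀ a b, f a = f b → φ a = φ b → a = b) :
    G.IsStronglyNonrepetitiveColouring fun v => (φ v, χ (f v)) := by
  intro l k hl hk hlen hrep
  have hrepφ := List.take_map_eq_drop_map_of_take_eq_drop hrep Prod.fst
  have hrepχ := List.take_map_eq_drop_map_of_take_eq_drop hrep Prod.snd
  rw [List.map_map] at hrepφ hrepχ
  obtain ⟨i, hik, hfi⟩ :=
    hχ (l.map f) k (hl.map hf) hk (by rw [List.length_map, hlen])
      (by rw [List.map_map]; exact hrepχ)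
  refine ⟨i, hik, ?_⟩
  have hφi := List.getElem?_eq_getElem?_add_of_take_eq_drop hrepφ hik
  rw [List.getElem?_map, List.getElem?_map] at hfi hφi
  rw [List.getElem?_eq_getElem (by omega), List.getElem?_eq_getElem (by omega)] at hfi hφi ⊢
  exact congrArg some (hφ _ _ (Option.some.inj hfi) (Option.some.inj hφi))

theorem strongNonrepChromNum_le {n : ℕ} {φ : V → Fin n}
    (hφ : G.IsStronglyNonrepetitiveColouring φ) : G.strongNonrepChromNum ≤ n :=
  Nat.sInf_le ⟨φ, hφ⟩

theorem exists_isStronglyNonrepetitiveColouring_fin_strongNonrepChromNum [Finite V] :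
    ∃ φ : V → Fin G.strongNonrepChromNum, G.IsStronglyNonrepetitiveColouring φ := by
  obtain ⟨n, ⟨e⟩⟩ := Finite.exists_equiv_fin V
  exact Nat.sInf_mem (s := {n | ∃ φ : V → Fin n, G.IsStronglyNonrepetitiveColouring φ})
    ⟨n, e, isStronglyNonrepetitiveColouring_of_injective e.injective⟩

end SimpleGraph

theorem strongNonrepChromNum_strongProd_completeGraph_le_general (V : Type) [Fintype V]
    (G : SimpleGraph V) (ℓ : ℕ) :
    (G.strongProd (⊤ : SimpleGraph (Fin ℓ))).strongNonrepChromNum ≤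
      ℓ * G.strongNonrepChromNum := by
  obtain ⟨χ, hχ⟩ := G.exists_isStronglyNonrepetitiveColouring_fin_strongNonrepChromNum
  have hprod : (G.strongProd ⊤).IsStronglyNonrepetitiveColouring
      fun p : V × Fin ℓ => (p.2, χ p.1) :=
    hχ.prod_comp (fun _ _ => SimpleGraph.strongProd_adj_fst) fun _ _ => Prod.ext
  exact SimpleGraph.strongNonrepChromNum_le (hprod.comp_injective finProdFinEquiv.injective)

/-- **Corollary 8.** For every graph `G` and every `ℓ ≥ 1`,
`π*(G ⊠ Kₗ) ≤ ℓ · π*(G)`. -/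
theorem strongNonrepChromNum_strongProd_completeGraph_le (V : Type) [Fintype V]
    (G : SimpleGraph V) (ℓ : ℕ) (hℓ : 1 ≤ ℓ) :
    (G.strongProd (⊤ : SimpleGraph (Fin ℓ))).strongNonrepChromNum ≤
      ℓ * G.strongNonrepChromNum :=
  strongNonrepChromNum_strongProd_completeGraph_le_general V G ℓ
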